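/- Let S : X → E be an admissible impact map, A ⊂ E an admissible acceptance set, ρ(X) = inf{Σ_{i=1}^d m_i : m ∈ ℝ^d, S(X+m) ∈ A}, and set M_0 := {m ∈ ℝ^d : Σ_{i=1}^d m_i = 0}. If S^{-1}(A) ∩ M_0 = {0}, then ρ is proper and σ(X,X')-lower semicontinuous. -/

import Mathlib

open MeasureTheory Filter Set
open scoped ENNReal

noncomputable section

namespace SystemicRisk

variable {Ω : Type*} [MeasurableSpace Ω]

/-- A random variable is essentially bounded. -/
def EssBdd {μ : Measure Ω} (f : Ω →ₘ[μ] ℝ) : Prop :=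
  ∃ C : ℝ, ∀ᵐ ω ∂μ, |f ω| ≤ C

/-- The scalar pairing `E[U W]`. -/
def ip {μ : Measure Ω} (U W : Ω →ₘ[μ] ℝ) : ℝ := ∫ ω, U ω * W ω ∂μ

/-- The Köthe dual of a set of random variables. -/
def kdual {μ : Measure Ω} (L : Set (Ω →ₘ[μ] ℝ)) : Set (Ω →ₘ[μ] ℝ) :=
  {Z | ∀ f ∈ L, Integrable (fun ω => f ω * Z ω) μ}

/-- `nrm` is a Banach lattice norm on `L` (w.r.t. the a.s. order). -/
structure IsBLNorm {μ : Measure Ω} (L : Set (Ω →ₘ[μ] ℝ)) (nrm : (Ω →ₘ[μ] ℝ) → ℝ) : Prop where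
  nonneg : ∀ f ∈ L, 0 ≤ nrm f
  eq_zero_iff : ∀ f ∈ L, (nrm f = 0 ↔ f = 0)
  smul_eq : ∀ f ∈ L, ∀ c : ℝ, nrm (c • f) = |c| * nrm f
  triangle : ∀ f ∈ L, ∀ g ∈ L, nrm (f + g) ≤ nrm f + nrm g
  solid : ∀ f ∈ L, ∀ g ∈ L, |f| ≤ |g| → nrm f ≤ nrm g
  complete : ∀ u : ℕ → (Ω →ₘ[μ] ℝ), (∀ n, u n ∈ L) →
      (∀ ε : ℝ, 0 < ε → ∃ N : ℕ, ∀ m ≥ N, ∀ n ≥ N, nrm (u m - u n) < ε) →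
      ∃ f ∈ L, ∀ ε : ℝ, 0 < ε → ∃ N : ℕ, ∀ n ≥ N, nrm (u n - f) < ε

/-- `L` is an admissible space: a linear subspace of `L^0` which is a Banach lattice
(for the a.s. order, with norm `nrm`) satisfying `L^∞ ⊆ L ⊆ L^1`. -/
structure IsAdmissible {μ : Measure Ω} (L : Set (Ω →ₘ[μ] ℝ)) (nrm : (Ω →ₘ[μ] ℝ) → ℝ) : Prop where
  zero_mem : (0 : Ω →ₘ[μ] ℝ) ∈ L
  add_mem : ∀ f ∈ L, ∀ g ∈ L, f + g ∈ L
  smul_mem : ∀ (c : ℝ), ∀ f ∈ L, c • f ∈ L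
  sup_mem : ∀ f ∈ L, ∀ g ∈ L, f ⊔ g ∈ L
  inf_mem : ∀ f ∈ L, ∀ g ∈ L, f ⊓ g ∈ L
  linfty_subset : ∀ f, EssBdd f → f ∈ L
  subset_lone : ∀ f ∈ L, Integrable f μ
  banach : IsBLNorm L nrm

variable {d : ℕ}

/-- The product space `X = X_1 × ⋯ × X_d`. -/
def prodSet {μ : Measure Ω} (Li : Fin d → Set (Ω →ₘ[μ] ℝ)) : Set (Fin d → (Ω →ₘ[μ] ℝ)) :=
  {X | ∀ i, X i ∈ Li i}

/-- The vector pairing `E[⟨X,Z⟩] = ∑ i, E[X_i Z_i]`. -/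
def pairing {μ : Measure Ω} (X Z : Fin d → (Ω →ₘ[μ] ℝ)) : ℝ := ∑ i, ip (X i) (Z i)

/-- The constant random vector associated with `m ∈ ℝ^d`. -/
def cvec (μ : Measure Ω) (m : Fin d → ℝ) : Fin d → (Ω →ₘ[μ] ℝ) :=
  fun i => (AEEqFun.const Ω (m i) : Ω →ₘ[μ] ℝ)

/-- The weak topology `σ(P, D)` on a set of random vectors `P` induced by the pairing
with elements of `D`. -/
def wtop {μ : Measure Ω} (P D : Set (Fin d → (Ω →ₘ[μ] ℝ))) : TopologicalSpace ↥P :=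
  TopologicalSpace.induced
    (fun X : ↥P => fun Z : ↥D => pairing (X : Fin d → (Ω →ₘ[μ] ℝ)) (Z : Fin d → (Ω →ₘ[μ] ℝ)))
    Pi.topologicalSpace

/-- The weak topology `σ(P, D)` on a set of random variables `P` induced by the pairing
with elements of `D`. -/
def wtop1 {μ : Measure Ω} (P D : Set (Ω →ₘ[μ] ℝ)) : TopologicalSpace ↥P :=
  TopologicalSpace.induced
    (fun U : ↥P => fun W : ↥D => ip (U : Ω →ₘ[μ] ℝ) (W : Ω →ₘ[μ] ℝ))
    Pi.topologicalSpace

/-- An admissible impact map `S : X → E`. -/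
structure IsAdmissibleImpact {μ : Measure Ω} (XX XX' : Set (Fin d → (Ω →ₘ[μ] ℝ)))
    (EE EE' : Set (Ω →ₘ[μ] ℝ)) (S : (Fin d → (Ω →ₘ[μ] ℝ)) → (Ω →ₘ[μ] ℝ)) : Prop where
  mapsTo : ∀ X ∈ XX, S X ∈ EE
  nonconst : ∃ X ∈ XX, ∃ Y ∈ XX, S X ≠ S Y
  normalized : S 0 = 0
  mono : ∀ X ∈ XX, ∀ Y ∈ XX, X ≤ Y → S X ≤ S Y
  concave : ∀ X ∈ XX, ∀ Y ∈ XX, ∀ t : ℝ, 0 ≤ t → t ≤ 1 →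
      t • S X + (1 - t) • S Y ≤ S (t • X + (1 - t) • Y)
  usc : ∀ W ∈ EE', (0 : Ω →ₘ[μ] ℝ) ≤ W →
      @UpperSemicontinuous (↥XX) ℝ (wtop XX XX') _
        (fun X : ↥XX => ∫ ω, S (X : Fin d → (Ω →ₘ[μ] ℝ)) ω * W ω ∂μ)

/-- An admissible acceptance set `A ⊆ E` (relative to the impact map `S`). -/
structure IsAdmissibleAcceptance {μ : Measure Ω} (XX : Set (Fin d → (Ω →ₘ[μ] ℝ)))
    (EE EE' : Set (Ω →ₘ[μ] ℝ)) (S : (Fin d → (Ω →ₘ[μ] ℝ)) → (Ω →ₘ[μ] ℝ))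
    (A : Set (Ω →ₘ[μ] ℝ)) : Prop where
  subset : A ⊆ EE
  preimage_nonempty : ∃ X ∈ XX, S X ∈ A
  preimage_proper : ∃ X ∈ XX, S X ∉ A
  zero_mem : (0 : Ω →ₘ[μ] ℝ) ∈ A
  mono : ∀ U ∈ A, ∀ V ∈ EE, (0 : Ω →ₘ[μ] ℝ) ≤ V → U + V ∈ A
  convex : ∀ U ∈ A, ∀ V ∈ A, ∀ t : ℝ, 0 ≤ t → t ≤ 1 → t • U + (1 - t) • V ∈ A
  closed : @IsClosed (↥EE) (wtop1 EE EE') {U : ↥EE | (U : Ω →ₘ[μ] ℝ) ∈ A}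

/-- The systemic acceptance set `S⁻¹(A) = {X ∈ X : S(X) ∈ A}`. -/
def sysAcc {μ : Measure Ω} (XX : Set (Fin d → (Ω →ₘ[μ] ℝ)))
    (S : (Fin d → (Ω →ₘ[μ] ℝ)) → (Ω →ₘ[μ] ℝ)) (A : Set (Ω →ₘ[μ] ℝ)) :
    Set (Fin d → (Ω →ₘ[μ] ℝ)) :=
  {X ∈ XX | S X ∈ A}

/-- The "first allocate, then aggregate" systemic risk measure `ρ`. -/
def rho (μ : Measure Ω) (S : (Fin d → (Ω →ₘ[μ] ℝ)) → (Ω →ₘ[μ] ℝ)) (A : Set (Ω →ₘ[μ] ℝ))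
    (X : Fin d → (Ω →ₘ[μ] ℝ)) : EReal :=
  ⨅ m ∈ {m : Fin d → ℝ | S (X + cvec μ m) ∈ A}, ((∑ i, m i : ℝ) : EReal)

/-- The (lower) support function of a set of random vectors. -/
def suppV {μ : Measure Ω} (B : Set (Fin d → (Ω →ₘ[μ] ℝ))) (Z : Fin d → (Ω →ₘ[μ] ℝ)) : EReal :=
  ⨅ X ∈ B, ((pairing X Z : ℝ) : EReal)

/-- The barrier cone of a set of random vectors, inside the dual set `D`. -/
def barrV {μ : Measure Ω} (B D : Set (Fin d → (Ω →ₘ[μ] ℝ))) : Set (Fin d → (Ω →ₘ[μ] ℝ)) :=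
  {Z ∈ D | ⊥ < suppV B Z}

/-- The (lower) support function of a set of random variables. -/
def suppS {μ : Measure Ω} (A : Set (Ω →ₘ[μ] ℝ)) (W : Ω →ₘ[μ] ℝ) : EReal :=
  ⨅ U ∈ A, ((ip U W : ℝ) : EReal)

/-- The barrier cone of a set of random variables, inside the dual set `D`. -/
def barrS {μ : Measure Ω} (A D : Set (Ω →ₘ[μ] ℝ)) : Set (Ω →ₘ[μ] ℝ) :=
  {W ∈ D | ⊥ < suppS A W}

/-- The generic penalty function with dual variables `W` ranging over `K`. -/
def penalty {μ : Measure Ω} (XX : Set (Fin d → (Ω →ₘ[μ] ℝ)))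
    (A : Set (Ω →ₘ[μ] ℝ)) (S : (Fin d → (Ω →ₘ[μ] ℝ)) → (Ω →ₘ[μ] ℝ))
    (K : Set (Ω →ₘ[μ] ℝ)) (Z : Fin d → (Ω →ₘ[μ] ℝ)) : EReal :=
  ⨆ W ∈ K, (suppS A W +
    ⨅ X ∈ XX, ((pairing X Z - ∫ ω, S X ω * W ω ∂μ : ℝ) : EReal))

/-- a.s. strictly positive random variables. -/
def strictPos (μ : Measure Ω) : Set (Ω →ₘ[μ] ℝ) := {W | ∀ᵐ ω ∂μ, 0 < W ω}

/-- The penalty function `α`. -/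
def alpha {μ : Measure Ω} (XX : Set (Fin d → (Ω →ₘ[μ] ℝ))) (EE' : Set (Ω →ₘ[μ] ℝ))
    (A : Set (Ω →ₘ[μ] ℝ)) (S : (Fin d → (Ω →ₘ[μ] ℝ)) → (Ω →ₘ[μ] ℝ)) :
    (Fin d → (Ω →ₘ[μ] ℝ)) → EReal :=
  penalty XX A S (barrS A EE')

/-- The penalty function `α⁺`. -/
def alphaPlus {μ : Measure Ω} (XX : Set (Fin d → (Ω →ₘ[μ] ℝ))) (EE' : Set (Ω →ₘ[μ] ℝ))
    (A : Set (Ω →ₘ[μ] ℝ)) (S : (Fin d → (Ω →ₘ[μ] ℝ)) → (Ω →ₘ[μ] ℝ)) :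
    (Fin d → (Ω →ₘ[μ] ℝ)) → EReal :=
  penalty XX A S (barrS A EE' ∩ (strictPos μ ∪ {0}))

/-- a.s. strictly positive random vectors. -/
def strictPosV (μ : Measure Ω) (d : ℕ) : Set (Fin d → (Ω →ₘ[μ] ℝ)) :=
  {Z | ∀ i, ∀ᵐ ω ∂μ, 0 < Z i ω}

/-- The set `C` of nonnegative dual vectors with all components of expectation one. -/
def Cset {μ : Measure Ω} (XX' : Set (Fin d → (Ω →ₘ[μ] ℝ))) : Set (Fin d → (Ω →ₘ[μ] ℝ)) :=
  {Z ∈ XX' | (∀ i, (0 : Ω →ₘ[μ] ℝ) ≤ Z i) ∧ ∀ i, (∫ ω, Z i ω ∂μ) = 1}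

/-- A map with values in `[−∞,∞]` is proper on `P` if it never attains `−∞` on `P`
and is finite somewhere on `P`. -/
def ProperOn {β : Type*} (P : Set β) (f : β → EReal) : Prop :=
  (∀ x ∈ P, f x ≠ ⊥) ∧ ∃ x ∈ P, f x ≠ ⊤

/-- The positive part of an extended real number, as an extended nonnegative real. -/
def epos (x : EReal) : ℝ≥0∞ := if x = ⊤ then ⊤ else ENNReal.ofReal x.toReal

/-- The integral of an extended-real-valued function. -/
def eintegral (μ : Measure Ω) (g : Ω → EReal) : EReal :=
  ((∫⁻ ω, epos (g ω) ∂μ : ℝ≥0∞) : EReal) - ((∫⁻ ω, epos (-(g ω)) ∂μ : ℝ≥0∞) : EReal)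



/-!
`S⁻¹(A)` is weakly closed: a position outside it is separated, through finitely many functionals
and Hahn–Banach in `ℝⁿ`, by a positive `W ∈ E'`, and upper semicontinuity of `E[S(·) W]` provides
an open neighbourhood. Hence the sublevel sets of `ρ` are closed unless acceptable allocations
`m` can escape to infinity with bounded total. If they could, the normalized allocations would
converge to a unit direction `u` with `∑ uᵢ ≤ 0` whose whole ray lies in `S⁻¹(A)`, since
`S⁻¹(A)` is convex, weakly closed and contains `0`. Raising `u` to a zero-sum vector keeps it
acceptable, so `S⁻¹(A) ∩ M₀ = {0}` forces `u = -κ • 1`; but if all `-s • 1` are accepted, a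
positive functional separating some `X ∉ S⁻¹(A)` must vanish. The same escape argument applied
to a fixed position shows `ρ > -∞`.
-/
open Topology

lemma nonneg_of_forall_le_mul {a β : ℝ} (h : ∀ t : ℝ, 0 ≤ t → β ≤ t * a) : 0 ≤ a := by
  by_contra! ha
  have key := h ((|β| + 1) / -a) (div_nonneg (by positivity) (by linarith))
  rw [show (|β| + 1) / -a * a = -(|β| + 1) by field_simp [ha.ne]] at key
  linarith [neg_abs_le β]

lemma neg_sum_le_card_mul_norm (m : Fin d → ℝ) : -∑ k, m k ≤ d * ‖m‖ := by
  rw [← Finset.sum_neg_distrib]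
  simpa using Finset.sum_le_sum fun k (_ : k ∈ Finset.univ) =>
    (neg_le_abs (m k)).trans (norm_le_pi_norm m k)

theorem exists_sum_lt_of_isClosed_induced {P D : Type*} (Φ : P → D → ℝ) {C : Set P}
    (hC : IsClosed[TopologicalSpace.induced Φ Pi.topologicalSpace] C)
    (hconv : Convex ℝ (Φ '' C)) {x₀ : P} (hx₀ : x₀ ∉ C) :
    ∃ (n : ℕ) (z : Fin n → D) (c : Fin n → ℝ) (β : ℝ),
      ∑ k, c k * Φ x₀ (z k) < β ∧ ∀ x ∈ C, β ≤ ∑ k, c k * Φ x (z k) := by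
  classical
  let _ := TopologicalSpace.induced Φ Pi.topologicalSpace
  -- a basic neighbourhood of `x₀` disjoint from `C` constrains only finitely many coordinates
  have hnhds : Cᶜ ∈ 𝓝 x₀ := hC.isOpen_compl.mem_nhds hx₀
  rw [nhds_induced, mem_comap] at hnhds
  obtain ⟨s, hs, hsC⟩ := hnhds
  rw [nhds_pi, Filter.mem_pi] at hs
  obtain ⟨I, hI, t, ht, hIt⟩ := hs
  have := hI.to_subtype
  obtain ⟨n, ⟨e⟩⟩ := Finite.exists_equiv_fin I
  set z : Fin n → D := fun k => e.symm k
  set π : (D → ℝ) →ₗ[ℝ] Fin n → ℝ := LinearMap.funLeft ℝ ℝ z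
  set K := π '' (Φ '' C)
  have hfar : π (Φ x₀) ∉ closure K := by
    rw [mem_closure_iff_nhds]
    push Not
    refine ⟨Set.univ.pi fun k => t (z k), set_pi_mem_nhds Set.finite_univ fun k _ => ht _, ?_⟩
    refine Set.eq_empty_of_forall_notMem ?_
    rintro _ ⟨hbox, _, ⟨x, hxC, rfl⟩, rfl⟩
    refine hsC (hIt fun i hi => ?_) hxC
    simpa [π, z] using hbox (e ⟨i, hi⟩) trivial
  obtain ⟨f, u, hfK, hfx⟩ :=
    geometric_hahn_banach_closed_point (hconv.linear_image π).closure isClosed_closure hfar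
  have hf : ∀ x, f (π (Φ x)) = ∑ k, f (Pi.single k 1) * Φ x (z k) := fun x => by
    have hsingle : ∀ k : Fin n, (fun j => if k = j then (1 : ℝ) else 0) = Pi.single k 1 :=
      fun k => funext fun j => by simp [Pi.single_apply, eq_comm]
    simpa [hsingle, mul_comm, π] using
      LinearMap.pi_apply_eq_sum_univ (f : (Fin n → ℝ) →ₗ[ℝ] ℝ) (π (Φ x))
  refine ⟨n, z, fun k => -f (Pi.single k 1), -u, ?_, fun x hx => ?_⟩
  · simpa [hf] using hfx
  · simpa [hf] using (hfK _ (subset_closure ⟨Φ x, ⟨x, hx, rfl⟩, rfl⟩)).le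

section RandomVariables

variable {μ : Measure Ω}

lemma essBdd_const (r : ℝ) : EssBdd (AEEqFun.const Ω r : Ω →ₘ[μ] ℝ) :=
  ⟨|r|, (AEEqFun.coeFn_const Ω r).mono fun _ hω => by simp [hω]⟩

lemma IsAdmissible.const_mem {L : Set (Ω →ₘ[μ] ℝ)} {nrm : (Ω →ₘ[μ] ℝ) → ℝ}
    (hL : IsAdmissible L nrm) (r : ℝ) : AEEqFun.const Ω r ∈ L :=
  hL.linfty_subset _ (essBdd_const r)

lemma IsAdmissible.sub_mem {L : Set (Ω →ₘ[μ] ℝ)} {nrm : (Ω →ₘ[μ] ℝ) → ℝ}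
    (hL : IsAdmissible L nrm) {U V : Ω →ₘ[μ] ℝ} (hU : U ∈ L) (hV : V ∈ L) : U - V ∈ L := by
  simpa [sub_eq_add_neg] using hL.add_mem U hU _ (hL.smul_mem (-1) V hV)

lemma ip_add_left {U V W : Ω →ₘ[μ] ℝ} (hU : Integrable (fun ω => U ω * W ω) μ)
    (hV : Integrable (fun ω => V ω * W ω) μ) : ip (U + V) W = ip U W + ip V W := by
  rw [ip, ip, ip, ← integral_add hU hV]
  refine integral_congr_ae ((AEEqFun.coeFn_add U V).mono fun ω hω => ?_)
  simp [hω, add_mul]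

lemma ip_smul_left (c : ℝ) (U W : Ω →ₘ[μ] ℝ) : ip (c • U) W = c * ip U W := by
  rw [ip, ip, ← integral_const_mul]
  refine integral_congr_ae ((AEEqFun.coeFn_smul c U).mono fun ω hω => ?_)
  simp [hω, mul_assoc]

lemma ip_const_left [IsProbabilityMeasure μ] (r : ℝ) (W : Ω →ₘ[μ] ℝ) :
    ip (AEEqFun.const Ω r) W = r * ∫ ω, W ω ∂μ := by
  simp [ip, integral_const_mul]

lemma integrable_of_mem_kdual [IsProbabilityMeasure μ] {L : Set (Ω →ₘ[μ] ℝ)}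
    {nrm : (Ω →ₘ[μ] ℝ) → ℝ} (hL : IsAdmissible L nrm) {W : Ω →ₘ[μ] ℝ} (hW : W ∈ kdual L) :
    Integrable W μ := by
  simpa using hW _ (hL.const_mem 1)

lemma coeFn_finset_sum_smul {κ : Type*} (s : Finset κ) (c : κ → ℝ) (W : κ → Ω →ₘ[μ] ℝ) :
    ⇑(∑ k ∈ s, c k • W k) =ᵐ[μ] fun ω => ∑ k ∈ s, c k * W k ω := by
  classical
  induction s using Finset.induction_on with
  | empty => simp only [Finset.sum_empty]; exact AEEqFun.coeFn_zero
  | insert k s hk ih =>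
    filter_upwards [AEEqFun.coeFn_add (c k • W k) (∑ j ∈ s, c j • W j),
      AEEqFun.coeFn_smul (c k) (W k), ih] with ω h₁ h₂ h₃
    simp [Finset.sum_insert hk, h₁, h₂, h₃]

lemma finset_sum_smul_mem_kdual {κ : Type*} {L : Set (Ω →ₘ[μ] ℝ)} (s : Finset κ) (c : κ → ℝ)
    {W : κ → Ω →ₘ[μ] ℝ} (hW : ∀ k, W k ∈ kdual L) : ∑ k ∈ s, c k • W k ∈ kdual L := by
  intro U hU
  refine (integrable_finsetSum s fun k _ => (hW k U hU).const_mul (c k)).congr ?_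
  filter_upwards [coeFn_finset_sum_smul s c W] with ω hω
  simp [hω, Finset.mul_sum, mul_left_comm]

lemma ip_finset_sum_smul_right {κ : Type*} (s : Finset κ) (c : κ → ℝ) {U : Ω →ₘ[μ] ℝ}
    {W : κ → Ω →ₘ[μ] ℝ} (hUW : ∀ k, Integrable (fun ω => U ω * W k ω) μ) :
    ip U (∑ k ∈ s, c k • W k) = ∑ k ∈ s, c k * ip U (W k) := by
  have : (fun ω => U ω * (∑ k ∈ s, c k • W k) ω) =ᵐ[μ]
      fun ω => ∑ k ∈ s, c k * (U ω * W k ω) := by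
    filter_upwards [coeFn_finset_sum_smul s c W] with ω hω
    simp [hω, Finset.mul_sum, mul_left_comm]
  rw [ip, integral_congr_ae this, integral_finsetSum s fun k _ => (hUW k).const_mul (c k)]
  simp [ip, integral_const_mul]

lemma nonneg_iff_ae_nonneg {f : Ω →ₘ[μ] ℝ} : 0 ≤ f ↔ ∀ᵐ ω ∂μ, 0 ≤ f ω := by
  rw [← AEEqFun.coeFn_le]
  refine eventually_congr ((AEEqFun.coeFn_zero (μ := μ) (β := ℝ)).mono fun ω hω => ?_)
  rw [hω]
  rfl

lemma sub_nonneg_of_le {U V : Ω →ₘ[μ] ℝ} (h : U ≤ V) : 0 ≤ V - U :=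
  nonneg_iff_ae_nonneg.mpr <| by
    filter_upwards [AEEqFun.coeFn_le.mpr h, AEEqFun.coeFn_sub V U] with ω h₁ h₂
    simpa [h₂] using h₁

lemma smul_nonneg_of_nonneg {t : ℝ} (ht : 0 ≤ t) {V : Ω →ₘ[μ] ℝ} (hV : 0 ≤ V) : 0 ≤ t • V :=
  nonneg_iff_ae_nonneg.mpr <| by
    filter_upwards [nonneg_iff_ae_nonneg.mp hV, AEEqFun.coeFn_smul t V] with ω h₁ h₂
    simpa [h₂] using mul_nonneg ht h₁

lemma nonneg_of_forall_ip_nonneg {L : Set (Ω →ₘ[μ] ℝ)} {nrm : (Ω →ₘ[μ] ℝ) → ℝ}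
    (hL : IsAdmissible L nrm) {W : Ω →ₘ[μ] ℝ} (hW : W ∈ kdual L)
    (h : ∀ V ∈ L, 0 ≤ V → 0 ≤ ip V W) : 0 ≤ W := by
  -- test `W` against the indicator `V` of `{W < 0}`, for which `V * W = min W 0`
  set g : ℝ → ℝ := (Set.Iio 0).indicator 1
  have hg : Measurable g := measurable_one.indicator measurableSet_Iio
  have hg01 : ∀ x, 0 ≤ g x ∧ g x ≤ 1 := fun x => by
    by_cases hx : x < 0 <;> simp [g, hx]
  set V := AEEqFun.compMeasurable g hg W
  have hV : ⇑V =ᵐ[μ] fun ω => g (W ω) := AEEqFun.coeFn_compMeasurable g hg W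
  have hVL : V ∈ L := hL.linfty_subset V ⟨1, hV.mono fun ω hω => by
    rw [hω, abs_of_nonneg (hg01 _).1]; exact (hg01 _).2⟩
  have hV0 : 0 ≤ V := nonneg_iff_ae_nonneg.mpr (hV.mono fun ω hω => hω ▸ (hg01 _).1)
  have hVW : (fun ω => V ω * W ω) =ᵐ[μ] fun ω => min (W ω) 0 := by
    filter_upwards [hV] with ω hω
    by_cases hw : W ω < 0 <;> simp [hω, g, hw, le_of_lt, not_lt.mp]
  have hint : ∫ ω, -min (W ω) 0 ∂μ = 0 := by
    rw [integral_neg, ← integral_congr_ae hVW, neg_eq_zero]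
    refine le_antisymm ?_ (h V hVL hV0)
    rw [integral_congr_ae hVW]
    exact integral_nonpos fun ω => min_le_right _ _
  have hzero := (integral_eq_zero_iff_of_nonneg_ae (Eventually.of_forall fun ω => by simp)
    ((hW V hVL).congr hVW).neg).mp hint
  exact nonneg_iff_ae_nonneg.mpr (hzero.mono fun ω hω => by simpa using hω)

end RandomVariables

/-- The set `M₀` of zero-sum constant vectors. -/
def zeroSumCvecs (μ : Measure Ω) (d : ℕ) : Set (Fin d → Ω →ₘ[μ] ℝ) :=
  {X | ∃ m : Fin d → ℝ, ∑ i, m i = 0 ∧ X = cvec μ m}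

section RandomVectors

variable {μ : Measure Ω} {Li : Fin d → Set (Ω →ₘ[μ] ℝ)} {nrmX : Fin d → (Ω →ₘ[μ] ℝ) → ℝ}

lemma prodSet_add_mem (hLi : ∀ i, IsAdmissible (Li i) (nrmX i)) {X Y : Fin d → Ω →ₘ[μ] ℝ}
    (hX : X ∈ prodSet Li) (hY : Y ∈ prodSet Li) : X + Y ∈ prodSet Li :=
  fun i => (hLi i).add_mem _ (hX i) _ (hY i)

lemma prodSet_smul_mem (hLi : ∀ i, IsAdmissible (Li i) (nrmX i)) (c : ℝ)
    {X : Fin d → Ω →ₘ[μ] ℝ} (hX : X ∈ prodSet Li) : c • X ∈ prodSet Li :=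
  fun i => (hLi i).smul_mem c _ (hX i)

lemma cvec_mem (hLi : ∀ i, IsAdmissible (Li i) (nrmX i)) (m : Fin d → ℝ) :
    cvec μ m ∈ prodSet Li :=
  fun i => (hLi i).const_mem (m i)

lemma zero_mem_prodSet (hLi : ∀ i, IsAdmissible (Li i) (nrmX i)) :
    (0 : Fin d → Ω →ₘ[μ] ℝ) ∈ prodSet Li :=
  fun i => (hLi i).zero_mem

lemma cvec_zero : cvec μ (0 : Fin d → ℝ) = 0 := rfl

lemma cvec_mono {m m' : Fin d → ℝ} (h : m ≤ m') : cvec μ m ≤ cvec μ m' := fun i =>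
  show AEEqFun.const Ω (m i) ≤ AEEqFun.const Ω (m' i) from AEEqFun.coeFn_le.mp <| by
    filter_upwards [AEEqFun.coeFn_const Ω (m i), AEEqFun.coeFn_const Ω (m' i)] with ω h₁ h₂
    simpa [h₁, h₂] using h i

lemma eq_zero_of_cvec_eq_zero [IsProbabilityMeasure μ] {m : Fin d → ℝ} (h : cvec μ m = 0) :
    m = 0 := by
  obtain ⟨ω⟩ := nonempty_of_isProbabilityMeasure μ
  funext i
  simpa [cvec] using congrArg (fun f : Ω →ₘ[μ] ℝ => f ω) (congrFun h i)

lemma pairing_add_left {X Y Z : Fin d → Ω →ₘ[μ] ℝ} (hX : X ∈ prodSet Li) (hY : Y ∈ prodSet Li)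
    (hZ : Z ∈ prodSet fun i => kdual (Li i)) :
    pairing (X + Y) Z = pairing X Z + pairing Y Z := by
  simp only [pairing, ← Finset.sum_add_distrib]
  exact Finset.sum_congr rfl fun i _ => ip_add_left (hZ i _ (hX i)) (hZ i _ (hY i))

lemma pairing_smul_left (c : ℝ) (X Z : Fin d → Ω →ₘ[μ] ℝ) :
    pairing (c • X) Z = c * pairing X Z := by
  simp only [pairing, Finset.mul_sum]
  exact Finset.sum_congr rfl fun i _ => ip_smul_left c (X i) (Z i)

lemma pairing_cvec_left [IsProbabilityMeasure μ] (m : Fin d → ℝ) (Z : Fin d → Ω →ₘ[μ] ℝ) :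
    pairing (cvec μ m) Z = ∑ k, m k * ∫ ω, Z k ω ∂μ := by
  simp [pairing, cvec, ip_const_left]

lemma pairing_add_cvec [IsProbabilityMeasure μ] (hLi : ∀ i, IsAdmissible (Li i) (nrmX i))
    {X Z : Fin d → Ω →ₘ[μ] ℝ} (hX : X ∈ prodSet Li) (hZ : Z ∈ prodSet fun i => kdual (Li i))
    (m : Fin d → ℝ) : pairing (X + cvec μ m) Z = pairing X Z + ∑ k, m k * ∫ ω, Z k ω ∂μ := by
  rw [pairing_add_left hX (cvec_mem hLi m) hZ, pairing_cvec_left]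

lemma pairing_single_left [DecidableEq (Fin d)] (i : Fin d) (V : Ω →ₘ[μ] ℝ)
    (Z : Fin d → Ω →ₘ[μ] ℝ) : pairing (Pi.single i V) Z = ip V (Z i) := by
  rw [pairing, Finset.sum_eq_single i (fun k _ hk => ?_) (by simp), Pi.single_eq_same]
  simpa [Pi.single_eq_of_ne hk] using ip_smul_left 0 0 (Z k)

lemma finset_sum_smul_mem_prodSet_kdual {κ : Type*} (s : Finset κ) (c : κ → ℝ)
    {Z : κ → Fin d → Ω →ₘ[μ] ℝ} (hZ : ∀ k, Z k ∈ prodSet fun i => kdual (Li i)) :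
    ∑ k ∈ s, c k • Z k ∈ prodSet fun i => kdual (Li i) := fun i => by
  simpa [Finset.sum_apply] using finset_sum_smul_mem_kdual s c fun k => hZ k i

lemma pairing_finset_sum_smul_right {κ : Type*} (s : Finset κ) (c : κ → ℝ)
    {X : Fin d → Ω →ₘ[μ] ℝ} {Z : κ → Fin d → Ω →ₘ[μ] ℝ} (hX : X ∈ prodSet Li)
    (hZ : ∀ k, Z k ∈ prodSet fun i => kdual (Li i)) :
    pairing X (∑ k ∈ s, c k • Z k) = ∑ k ∈ s, c k * pairing X (Z k) := by
  simp only [pairing, Finset.mul_sum]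
  rw [Finset.sum_comm]
  refine Finset.sum_congr rfl fun i _ => ?_
  simpa [Finset.sum_apply] using ip_finset_sum_smul_right s c fun k => hZ k i _ (hX i)

variable (Li) in
abbrev weakTop : TopologicalSpace ↥(prodSet Li) :=
  wtop (prodSet Li) (prodSet fun i => kdual (Li i))

attribute [local instance] weakTop

lemma tendsto_nhds_iff_pairing {ι : Type*} {l : Filter ι} {f : ι → ↥(prodSet Li)}
    {X : ↥(prodSet Li)} :
    Tendsto f l (𝓝 X) ↔ ∀ Z : ↥(prodSet fun i => kdual (Li i)),
      Tendsto (fun j => pairing (f j : Fin d → Ω →ₘ[μ] ℝ) Z) l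
        (𝓝 (pairing (X : Fin d → Ω →ₘ[μ] ℝ) Z)) := by
  have hnhds : 𝓝 X = comap _ _ := nhds_induced _ X
  rw [hnhds, tendsto_comap_iff, tendsto_pi_nhds]
  rfl

end RandomVectors

section RiskMeasure

variable {μ : Measure Ω} {S : (Fin d → Ω →ₘ[μ] ℝ) → Ω →ₘ[μ] ℝ} {A : Set (Ω →ₘ[μ] ℝ)}
  {X : Fin d → Ω →ₘ[μ] ℝ}

lemma rho_le_sum {m : Fin d → ℝ} (hm : S (X + cvec μ m) ∈ A) :
    rho μ S A X ≤ ((∑ k, m k : ℝ) : EReal) :=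
  iInf₂_le m hm

lemma exists_sum_lt_of_rho_lt {b : EReal} (hb : rho μ S A X < b) :
    ∃ m : Fin d → ℝ, S (X + cvec μ m) ∈ A ∧ ((∑ k, m k : ℝ) : EReal) < b := by
  simpa [rho, iInf_lt_iff] using hb

lemma rho_le_iff {y : EReal} : rho μ S A X ≤ y ↔
    ∀ r : ℝ, y < r → ∃ m : Fin d → ℝ, ∑ k, m k ≤ r ∧ S (X + cvec μ m) ∈ A := by
  refine ⟨fun hy r hr => ?_, fun h => EReal.le_of_forall_lt_iff_le.mp fun r hr => ?_⟩
  · obtain ⟨m, hm, hlt⟩ := exists_sum_lt_of_rho_lt (hy.trans_lt hr)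
    exact ⟨m, (EReal.coe_lt_coe_iff.mp hlt).le, hm⟩
  · obtain ⟨m, hle, hm⟩ := h r hr
    exact (rho_le_sum hm).trans (EReal.coe_le_coe_iff.mpr hle)

end RiskMeasure

section Acceptance

variable {μ : Measure Ω} {Li : Fin d → Set (Ω →ₘ[μ] ℝ)} {nrmX : Fin d → (Ω →ₘ[μ] ℝ) → ℝ}
  {EE : Set (Ω →ₘ[μ] ℝ)} {nrmE : (Ω →ₘ[μ] ℝ) → ℝ}
  {S : (Fin d → Ω →ₘ[μ] ℝ) → Ω →ₘ[μ] ℝ} {A : Set (Ω →ₘ[μ] ℝ)}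

lemma IsAdmissibleAcceptance.mem_of_le {XX : Set (Fin d → Ω →ₘ[μ] ℝ)} {EE' : Set (Ω →ₘ[μ] ℝ)}
    (hE : IsAdmissible EE nrmE) (hA : IsAdmissibleAcceptance XX EE EE' S A)
    {U V : Ω →ₘ[μ] ℝ} (hU : U ∈ A) (hV : V ∈ EE) (hUV : U ≤ V) : V ∈ A := by
  simpa using hA.mono U hU _ (hE.sub_mem hV (hA.subset hU)) (sub_nonneg_of_le hUV)

lemma IsAdmissibleAcceptance.smul_mem_of_nonneg {XX : Set (Fin d → Ω →ₘ[μ] ℝ)}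
    {EE' : Set (Ω →ₘ[μ] ℝ)}
    (hE : IsAdmissible EE nrmE) (hA : IsAdmissibleAcceptance XX EE EE' S A)
    {V : Ω →ₘ[μ] ℝ} (hV : V ∈ EE) (hV0 : 0 ≤ V) {t : ℝ} (ht : 0 ≤ t) : t • V ∈ A := by
  simpa using hA.mono 0 hA.zero_mem _ (hE.smul_mem t V hV) (smul_nonneg_of_nonneg ht hV0)

theorem IsAdmissibleAcceptance.exists_nonneg_separating {XX : Set (Fin d → Ω →ₘ[μ] ℝ)}
    (hE : IsAdmissible EE nrmE) (hA : IsAdmissibleAcceptance XX EE (kdual EE) S A)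
    {U₀ : Ω →ₘ[μ] ℝ} (hU₀ : U₀ ∈ EE) (hU₀A : U₀ ∉ A) :
    ∃ W ∈ kdual EE, 0 ≤ W ∧ ∃ β : ℝ, ip U₀ W < β ∧ ∀ U ∈ A, β ≤ ip U W := by
  have hconv : Convex ℝ ((fun (U : ↥EE) (W : ↥(kdual EE)) => ip (U : Ω →ₘ[μ] ℝ) W) ''
      {U : ↥EE | (U : Ω →ₘ[μ] ℝ) ∈ A}) := by
    rintro _ ⟨U, hU, rfl⟩ _ ⟨V, hV, rfl⟩ a b ha _ hab
    obtain rfl : b = 1 - a := by linarith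
    refine ⟨⟨_, hA.subset (hA.convex _ hU _ hV a ha (by linarith))⟩,
      hA.convex _ hU _ hV a ha (by linarith), funext fun W => ?_⟩
    simp only [Pi.add_apply, Pi.smul_apply, smul_eq_mul]
    rw [ip_add_left (W.2 _ (hE.smul_mem _ _ U.2)) (W.2 _ (hE.smul_mem _ _ V.2)),
      ip_smul_left, ip_smul_left]
  obtain ⟨n, z, c, β, hβ₀, hβ⟩ :=
    exists_sum_lt_of_isClosed_induced _ hA.closed hconv (x₀ := ⟨U₀, hU₀⟩) hU₀A
  set W := ∑ k, c k • (z k : Ω →ₘ[μ] ℝ)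
  have hip : ∀ U ∈ EE, ip U W = ∑ k, c k * ip U (z k) := fun U hU =>
    ip_finset_sum_smul_right _ _ fun k => (z k).2 U hU
  have hW : W ∈ kdual EE := finset_sum_smul_mem_kdual _ _ fun k => (z k).2
  refine ⟨W, hW, nonneg_of_forall_ip_nonneg hE hW fun V hV hV0 => ?_, β, by rwa [hip U₀ hU₀],
    fun U hU => by rw [hip U (hA.subset hU)]; exact hβ ⟨U, hA.subset hU⟩ hU⟩
  refine nonneg_of_forall_le_mul (β := β) fun t ht => ?_
  have htV := hA.smul_mem_of_nonneg hE hV hV0 ht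
  rw [← ip_smul_left, hip _ (hA.subset htV)]
  exact hβ ⟨_, hA.subset htV⟩ htV

variable (Li nrmX EE nrmE S A) in
structure IsAdmissibleModel : Prop where
  spaces : ∀ i, IsAdmissible (Li i) (nrmX i)
  target : IsAdmissible EE nrmE
  impact : IsAdmissibleImpact (prodSet Li) (prodSet fun i => kdual (Li i)) EE (kdual EE) S
  acceptance : IsAdmissibleAcceptance (prodSet Li) EE (kdual EE) S A

namespace IsAdmissibleModel

lemma mem_of_le (h : IsAdmissibleModel Li nrmX EE nrmE S A) {X Y : Fin d → Ω →ₘ[μ] ℝ}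
    (hX : X ∈ prodSet Li) (hY : Y ∈ prodSet Li) (hXY : X ≤ Y) (hSX : S X ∈ A) : S Y ∈ A :=
  h.acceptance.mem_of_le h.target hSX (h.impact.mapsTo Y hY) (h.impact.mono X hX Y hY hXY)

lemma smul_add_one_sub_smul_mem (h : IsAdmissibleModel Li nrmX EE nrmE S A)
    {X Y : Fin d → Ω →ₘ[μ] ℝ} (hX : X ∈ prodSet Li) (hY : Y ∈ prodSet Li) (hSX : S X ∈ A)
    (hSY : S Y ∈ A) {t : ℝ} (ht₀ : 0 ≤ t) (ht₁ : t ≤ 1) : S (t • X + (1 - t) • Y) ∈ A :=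
  h.acceptance.mem_of_le h.target (h.acceptance.convex _ hSX _ hSY t ht₀ ht₁)
    (h.impact.mapsTo _ (prodSet_add_mem h.spaces (prodSet_smul_mem h.spaces t hX)
      (prodSet_smul_mem h.spaces _ hY)))
    (h.impact.concave X hX Y hY t ht₀ ht₁)

lemma zero_mem (h : IsAdmissibleModel Li nrmX EE nrmE S A) : S 0 ∈ A := by
  rw [h.impact.normalized]
  exact h.acceptance.zero_mem

lemma smul_mem (h : IsAdmissibleModel Li nrmX EE nrmE S A) {X : Fin d → Ω →ₘ[μ] ℝ}
    (hX : X ∈ prodSet Li) (hSX : S X ∈ A) {t : ℝ} (ht₀ : 0 ≤ t) (ht₁ : t ≤ 1) :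
    S (t • X) ∈ A := by
  simpa using h.smul_add_one_sub_smul_mem hX (zero_mem_prodSet h.spaces) hSX h.zero_mem ht₀ ht₁

attribute [local instance] weakTop

theorem isClosed_sysAcc (h : IsAdmissibleModel Li nrmX EE nrmE S A) :
    IsClosed {X : ↥(prodSet Li) | S X ∈ A} := by
  refine isOpen_compl_iff.mp (isOpen_iff_mem_nhds.mpr fun X₀ hX₀ => ?_)
  obtain ⟨W, hW, hW0, β, hβ₀, hβ⟩ :=
    h.acceptance.exists_nonneg_separating h.target (h.impact.mapsTo _ X₀.2) hX₀
  have hopen := upperSemicontinuous_iff_isOpen_preimage.mp (h.impact.usc W hW hW0) β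
  exact Filter.mem_of_superset (hopen.mem_nhds hβ₀) fun X hX hXA => (hβ _ hXA).not_gt hX

theorem exists_nonneg_separating (h : IsAdmissibleModel Li nrmX EE nrmE S A)
    {X₀ : Fin d → Ω →ₘ[μ] ℝ} (hX₀ : X₀ ∈ prodSet Li) (hX₀A : S X₀ ∉ A) :
    ∃ Z ∈ prodSet (fun i => kdual (Li i)), 0 ≤ Z ∧
      ∃ β : ℝ, pairing X₀ Z < β ∧ ∀ X ∈ prodSet Li, S X ∈ A → β ≤ pairing X Z := by
  classical
  have hconv : Convex ℝ ((fun (X : ↥(prodSet Li)) (Z : ↥(prodSet fun i => kdual (Li i))) =>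
      pairing (X : Fin d → Ω →ₘ[μ] ℝ) Z) '' {X : ↥(prodSet Li) | S X ∈ A}) := by
    rintro _ ⟨X, hX, rfl⟩ _ ⟨Y, hY, rfl⟩ a b ha _ hab
    obtain rfl : b = 1 - a := by linarith
    have hXa := prodSet_smul_mem h.spaces a X.2
    have hYb := prodSet_smul_mem h.spaces (1 - a) Y.2
    refine ⟨⟨_, prodSet_add_mem h.spaces hXa hYb⟩,
      h.smul_add_one_sub_smul_mem X.2 Y.2 hX hY ha (by linarith), funext fun Z => ?_⟩
    simp only [Pi.add_apply, Pi.smul_apply, smul_eq_mul]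
    rw [pairing_add_left hXa hYb Z.2, pairing_smul_left, pairing_smul_left]
  obtain ⟨n, z, c, β, hβ₀, hβ⟩ :=
    exists_sum_lt_of_isClosed_induced _ h.isClosed_sysAcc hconv (x₀ := ⟨X₀, hX₀⟩) hX₀A
  set Z := ∑ k, c k • (z k : Fin d → Ω →ₘ[μ] ℝ)
  have hpair : ∀ X ∈ prodSet Li, pairing X Z = ∑ k, c k * pairing X (z k) := fun X hX =>
    pairing_finset_sum_smul_right _ _ hX fun k => (z k).2
  have hZ : Z ∈ prodSet fun i => kdual (Li i) :=
    finset_sum_smul_mem_prodSet_kdual _ _ fun k => (z k).2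
  refine ⟨Z, hZ, fun i => nonneg_of_forall_ip_nonneg (h.spaces i) (hZ i) fun V hV hV0 => ?_, β,
    by rwa [hpair X₀ hX₀], fun X hX hSX => by rw [hpair X hX]; exact hβ ⟨X, hX⟩ hSX⟩
  refine nonneg_of_forall_le_mul (β := β) fun t ht => ?_
  set Y : Fin d → Ω →ₘ[μ] ℝ := Pi.single i (t • V)
  have hY : Y ∈ prodSet Li := fun k => by
    rcases eq_or_ne k i with rfl | hk
    · simpa [Y] using (h.spaces k).smul_mem t V hV
    · simpa [Y, Pi.single_eq_of_ne hk] using (h.spaces k).zero_mem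
  have hSY : S Y ∈ A := h.mem_of_le (zero_mem_prodSet h.spaces) hY
    (Pi.single_nonneg.mpr (smul_nonneg_of_nonneg ht hV0)) h.zero_mem
  rw [← ip_smul_left, ← pairing_single_left, hpair Y hY]
  exact hβ ⟨Y, hY⟩ hSY

end IsAdmissibleModel

end Acceptance

namespace IsAdmissibleModel

variable {μ : Measure Ω} [IsProbabilityMeasure μ] {Li : Fin d → Set (Ω →ₘ[μ] ℝ)}
  {nrmX : Fin d → (Ω →ₘ[μ] ℝ) → ℝ} {EE : Set (Ω →ₘ[μ] ℝ)} {nrmE : (Ω →ₘ[μ] ℝ) → ℝ}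
  {S : (Fin d → Ω →ₘ[μ] ℝ) → Ω →ₘ[μ] ℝ} {A : Set (Ω →ₘ[μ] ℝ)}

attribute [local instance] weakTop

theorem not_forall_neg_const_mem (h : IsAdmissibleModel Li nrmX EE nrmE S A) :
    ¬ ∀ s : ℝ, 0 ≤ s → S (cvec μ fun _ => -s) ∈ A := by
  intro hneg
  obtain ⟨X₀, hX₀, hX₀A⟩ := h.acceptance.preimage_proper
  obtain ⟨Z, hZ, hZ0, β, hβ₀, hβ⟩ := h.exists_nonneg_separating hX₀ hX₀A
  have hconst : ∀ s : ℝ, 0 ≤ s → β ≤ s * -∑ k, ∫ ω, Z k ω ∂μ := fun s hs => by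
    simpa [pairing_cvec_left, Finset.mul_sum] using hβ _ (cvec_mem h.spaces _) (hneg s hs)
  have hZk : ∀ k, 0 ≤ᵐ[μ] ⇑(Z k) := fun k => nonneg_iff_ae_nonneg.mp (hZ0 k)
  have hmean : ∀ k, ∫ ω, Z k ω ∂μ = 0 := by
    have hnn : ∀ k ∈ Finset.univ, 0 ≤ ∫ ω, Z k ω ∂μ := fun k _ => integral_nonneg_of_ae (hZk k)
    have hsum : ∑ k, ∫ ω, Z k ω ∂μ = 0 :=
      le_antisymm (by linarith [nonneg_of_forall_le_mul hconst]) (Finset.sum_nonneg hnn)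
    exact fun k => (Finset.sum_eq_zero_iff_of_nonneg hnn).mp hsum k (Finset.mem_univ k)
  have hpair : pairing X₀ Z = 0 := Finset.sum_eq_zero fun k _ => by
    have hzero := (integral_eq_zero_iff_of_nonneg_ae (hZk k)
      (integrable_of_mem_kdual (h.spaces k) (hZ k))).mp (hmean k)
    exact integral_eq_zero_of_ae (hzero.mono fun ω hω => by simp [hω])
  linarith [hconst 0 le_rfl]

theorem cvec_smul_mem_of_tendsto (h : IsAdmissibleModel Li nrmX EE nrmE S A) {ι : Type*}
    {l : Filter ι} [l.NeBot] {Xf : ι → ↥(prodSet Li)} {X₀ : ↥(prodSet Li)}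
    (hX : Tendsto Xf l (𝓝 X₀)) {mf : ι → Fin d → ℝ}
    (hacc : ∀ᶠ j in l, S (Xf j + cvec μ (mf j)) ∈ A) (hnorm : Tendsto (‖mf ·‖) l atTop)
    {u : Fin d → ℝ} (hdir : Tendsto (fun j => ‖mf j‖⁻¹ • mf j) l (𝓝 u)) {t : ℝ} (ht : 0 ≤ t) :
    S (cvec μ (t • u)) ∈ A := by
  -- scaling by `t / ‖m_j‖ → 0` kills the weakly convergent part `X_j` and leaves `t • u`
  set a : ι → ℝ := fun j => t * ‖mf j‖⁻¹
  set g : ι → ↥(prodSet Li) := fun j => ⟨a j • (Xf j + cvec μ (mf j)),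
    prodSet_smul_mem h.spaces _ (prodSet_add_mem h.spaces (Xf j).2 (cvec_mem h.spaces _))⟩
  have hg : ∀ᶠ j in l, S (g j) ∈ A := by
    filter_upwards [hacc, hnorm.eventually_ge_atTop (max t 1)] with j hacc hj
    have hpos : 0 < ‖mf j‖ := lt_of_lt_of_le one_pos (le_trans (le_max_right t 1) hj)
    refine h.smul_mem (prodSet_add_mem h.spaces (Xf j).2 (cvec_mem h.spaces _)) hacc
      (by positivity) ?_
    rw [show a j = t / ‖mf j‖ from div_eq_mul_inv t _ |>.symm, div_le_one hpos]
    exact le_trans (le_max_left t 1) hj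
  have hlim : Tendsto g l (𝓝 ⟨cvec μ (t • u), cvec_mem h.spaces _⟩) := by
    refine tendsto_nhds_iff_pairing.mpr fun Z => ?_
    have hpair : ∀ j, pairing (g j : Fin d → Ω →ₘ[μ] ℝ) Z =
        a j * pairing (Xf j : Fin d → Ω →ₘ[μ] ℝ) Z +
        ∑ k, t * (‖mf j‖⁻¹ • mf j) k * ∫ ω, (Z : Fin d → Ω →ₘ[μ] ℝ) k ω ∂μ := fun j => by
      rw [pairing_smul_left, pairing_add_cvec h.spaces (Xf j).2 Z.2, mul_add, Finset.mul_sum]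
      simp only [a, Pi.smul_apply, smul_eq_mul]
      ring_nf
    have ha : Tendsto a l (𝓝 0) := by
      simpa using hnorm.inv_tendsto_atTop.const_mul t
    have hsum := (ha.mul ((tendsto_nhds_iff_pairing.mp hX) Z)).add
      (tendsto_finsetSum Finset.univ fun k _ =>
        ((tendsto_pi_nhds.mp hdir k).const_mul t).mul_const (∫ ω, (Z : Fin d → Ω →ₘ[μ] ℝ) k ω ∂μ))
    simpa [hpair, pairing_cvec_left, mul_assoc] using hsum
  exact h.isClosed_sysAcc.mem_of_tendsto hlim hg

theorem eq_zero_of_forall_cvec_smul_mem (h : IsAdmissibleModel Li nrmX EE nrmE S A)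
    (hM0 : sysAcc (prodSet Li) S A ∩ zeroSumCvecs μ d = {0})
    {u : Fin d → ℝ} (hu : ∀ t : ℝ, 0 ≤ t → S (cvec μ (t • u)) ∈ A) (hsum : ∑ k, u k ≤ 0) :
    u = 0 := by
  rcases Nat.eq_zero_or_pos d with rfl | hd
  · exact Subsingleton.elim _ _
  set κ : ℝ := -(∑ k, u k) / d
  have hκ : 0 ≤ κ := div_nonneg (by linarith) (Nat.cast_nonneg d)
  have hv : cvec μ (u + fun _ => κ) ∈ sysAcc (prodSet Li) S A ∩ zeroSumCvecs μ d := by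
    refine ⟨⟨cvec_mem h.spaces _, h.mem_of_le (cvec_mem h.spaces u) (cvec_mem h.spaces _)
      (cvec_mono fun k => by simpa using hκ) (by simpa using hu 1 zero_le_one)⟩, _, ?_, rfl⟩
    simp only [Pi.add_apply, Finset.sum_add_distrib, Finset.sum_const, Finset.card_univ,
      Fintype.card_fin, nsmul_eq_mul, κ]
    field_simp
    ring
  rw [hM0] at hv
  have hu_const : u = fun _ => -κ := by
    funext k
    have := congrFun (eq_zero_of_cvec_eq_zero hv) k
    simp only [Pi.add_apply, Pi.zero_apply] at this
    linarith
  rcases hκ.eq_or_lt with hκ0 | hκ0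
  · rw [hu_const, ← hκ0, neg_zero]
    rfl
  refine absurd (fun s hs => ?_) h.not_forall_neg_const_mem
  convert hu (s / κ) (div_nonneg hs hκ) using 3
  funext k
  simp [hu_const, hκ0.ne']

theorem false_of_tendsto_norm_atTop (h : IsAdmissibleModel Li nrmX EE nrmE S A)
    (hM0 : sysAcc (prodSet Li) S A ∩ zeroSumCvecs μ d = {0})
    {ι : Type*} (U : Ultrafilter ι) {Xf : ι → ↥(prodSet Li)} {X₀ : ↥(prodSet Li)}
    (hX : Tendsto Xf U (𝓝 X₀)) {mf : ι → Fin d → ℝ}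
    (hacc : ∀ᶠ j in U, S (Xf j + cvec μ (mf j)) ∈ A) (hnorm : Tendsto (‖mf ·‖) U atTop)
    {c : ℝ} (hsum : ∀ᶠ j in U, ∑ k, mf j k ≤ c) : False := by
  set v : ι → Fin d → ℝ := fun j => ‖mf j‖⁻¹ • mf j
  have hv : ∀ᶠ j in U, v j ∈ Metric.sphere 0 1 := by
    filter_upwards [hnorm.eventually_gt_atTop 0] with j hj
    simp [v, norm_smul, hj.ne']
  obtain ⟨u, hu, hvu⟩ :=
    (isCompact_sphere (0 : Fin d → ℝ) 1).ultrafilter_le_nhds (U.map v) (le_principal_iff.mpr hv)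
  have hsum_u : ∑ k, u k ≤ 0 := by
    refine le_of_tendsto_of_tendsto (tendsto_finsetSum _ fun k _ => tendsto_pi_nhds.mp hvu k)
      (by simpa using hnorm.inv_tendsto_atTop.mul_const c) ?_
    filter_upwards [hsum, hnorm.eventually_gt_atTop 0] with j hj hpos
    simpa [v, ← Finset.mul_sum] using mul_le_mul_of_nonneg_left hj (inv_nonneg.mpr hpos.le)
  have hu0 := h.eq_zero_of_forall_cvec_smul_mem hM0
    (fun t ht => h.cvec_smul_mem_of_tendsto hX hacc hnorm hvu ht) hsum_u
  simp [hu0] at hu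

theorem rho_ne_bot (h : IsAdmissibleModel Li nrmX EE nrmE S A)
    (hM0 : sysAcc (prodSet Li) S A ∩ zeroSumCvecs μ d = {0})
    {X : Fin d → Ω →ₘ[μ] ℝ} (hX : X ∈ prodSet Li) : rho μ S A X ≠ ⊥ := by
  intro hbot
  have hm : ∀ n : ℕ, ∃ m : Fin d → ℝ,
      S (X + cvec μ m) ∈ A ∧ ((∑ k, m k : ℝ) : EReal) < ((-n : ℝ) : EReal) :=
    fun n => exists_sum_lt_of_rho_lt (hbot ▸ EReal.bot_lt_coe _)
  choose mf hacc hlt using hm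
  have hlt' : ∀ n : ℕ, ∑ k, mf n k < -n := fun n => EReal.coe_lt_coe_iff.mp (hlt n)
  have hnorm : Tendsto (‖mf ·‖) atTop atTop := by
    refine tendsto_atTop_mono (fun n => ?_)
      (tendsto_natCast_atTop_atTop.atTop_div_const (by positivity : (0 : ℝ) < d + 1))
    rw [div_le_iff₀ (by positivity)]
    nlinarith [neg_sum_le_card_mul_norm (mf n), hlt' n, norm_nonneg (mf n)]
  exact h.false_of_tendsto_norm_atTop hM0 (Ultrafilter.of atTop) (Xf := fun _ => ⟨X, hX⟩)
    tendsto_const_nhds (Eventually.of_forall hacc) (hnorm.mono_left (Ultrafilter.of_le _))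
    (c := 0) (Eventually.of_forall fun n => (hlt' n).le.trans (by simp))

theorem isClosed_setOf_exists_sum_le (h : IsAdmissibleModel Li nrmX EE nrmE S A)
    (hM0 : sysAcc (prodSet Li) S A ∩ zeroSumCvecs μ d = {0}) (c : ℝ) :
    IsClosed {X : ↥(prodSet Li) | ∃ m : Fin d → ℝ, ∑ k, m k ≤ c ∧ S (X + cvec μ m) ∈ A} := by
  refine isClosed_iff_ultrafilter.mpr fun X₀ U hU hT => ?_
  choose! w hw_sum hw_acc using fun X (hX : X ∈ {X : ↥(prodSet Li) |
    ∃ m : Fin d → ℝ, ∑ k, m k ≤ c ∧ S (X + cvec μ m) ∈ A}) => hX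
  by_cases hbdd : ∃ R, {X | ‖w X‖ ≤ R} ∈ U
  · obtain ⟨R, hR⟩ := hbdd
    obtain ⟨m, -, hwm⟩ := (isCompact_closedBall (0 : Fin d → ℝ) R).ultrafilter_le_nhds
      (U.map w) (le_principal_iff.mpr (Ultrafilter.mem_map.mpr
        (Filter.mem_of_superset hR fun X (hX : ‖w X‖ ≤ R) => by simpa using hX)))
    have hlim : Tendsto (fun X : ↥(prodSet Li) => (⟨X + cvec μ (w X),
        prodSet_add_mem h.spaces X.2 (cvec_mem h.spaces _)⟩ : ↥(prodSet Li))) U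
        (𝓝 ⟨X₀ + cvec μ m, prodSet_add_mem h.spaces X₀.2 (cvec_mem h.spaces _)⟩) := by
      refine tendsto_nhds_iff_pairing.mpr fun Z => ?_
      simp only [pairing_add_cvec h.spaces (Subtype.prop _) Z.2]
      exact ((tendsto_nhds_iff_pairing.mp hU) Z).add (tendsto_finsetSum _ fun k _ =>
        (tendsto_pi_nhds.mp hwm k).mul_const _)
    refine ⟨m, le_of_tendsto (tendsto_finsetSum _ fun k _ => tendsto_pi_nhds.mp hwm k)
      (Filter.mem_of_superset hT hw_sum), h.isClosed_sysAcc.mem_of_tendsto hlim ?_⟩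
    exact Filter.mem_of_superset hT hw_acc
  · push Not at hbdd
    have hnorm : Tendsto (‖w ·‖) U atTop := tendsto_atTop.mpr fun R =>
      Filter.mem_of_superset (Ultrafilter.compl_mem_iff_notMem.mpr (hbdd R))
        fun X (hX : ¬‖w X‖ ≤ R) => (not_le.mp hX).le
    exact (h.false_of_tendsto_norm_atTop hM0 U hU (Filter.mem_of_superset hT hw_acc) hnorm
      (Filter.mem_of_superset hT hw_sum)).elim

end IsAdmissibleModel

/-- if `S⁻¹(A) ∩ M₀ = {0}` with `M₀` the zero-sum constant vectors, then `ρ` is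
proper and `σ(X,X')`-lower semicontinuous. -/
theorem statement4 {μ : Measure Ω} [IsProbabilityMeasure μ] {d : ℕ}
    (Li : Fin d → Set (Ω →ₘ[μ] ℝ)) (nrmX : Fin d → ((Ω →ₘ[μ] ℝ) → ℝ))
    (EE : Set (Ω →ₘ[μ] ℝ)) (nrmE : (Ω →ₘ[μ] ℝ) → ℝ)
    (S : (Fin d → (Ω →ₘ[μ] ℝ)) → (Ω →ₘ[μ] ℝ)) (A : Set (Ω →ₘ[μ] ℝ))
    (hLi : ∀ i, IsAdmissible (Li i) (nrmX i))
    (hE : IsAdmissible EE nrmE)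
    (hS : IsAdmissibleImpact (prodSet Li) (prodSet fun i => kdual (Li i)) EE (kdual EE) S)
    (hA : IsAdmissibleAcceptance (prodSet Li) EE (kdual EE) S A)
    (hM0 : sysAcc (prodSet Li) S A ∩
        {X | ∃ m : Fin d → ℝ, (∑ i, m i) = 0 ∧ X = cvec μ m} = {0}) :
    ProperOn (prodSet Li) (rho μ S A) ∧
      @LowerSemicontinuous (↥(prodSet Li)) EReal
        (wtop (prodSet Li) (prodSet fun i => kdual (Li i))) _
        (fun X : ↥(prodSet Li) => rho μ S A (X : Fin d → (Ω →ₘ[μ] ℝ))) := by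
  have h : IsAdmissibleModel Li nrmX EE nrmE S A := ⟨hLi, hE, hS, hA⟩
  obtain ⟨X₀, hX₀, hSX₀⟩ := hA.preimage_nonempty
  have hρX₀ : rho μ S A X₀ ≤ ((0 : ℝ) : EReal) := by
    simpa using rho_le_sum (m := 0) (by simpa [cvec_zero] using hSX₀)
  refine ⟨⟨fun X hX => h.rho_ne_bot hM0 hX, X₀, hX₀, ne_top_of_le_ne_top (by simp) hρX₀⟩, ?_⟩
  let _ := weakTop Li
  refine lowerSemicontinuous_iff_isClosed_preimage.mpr fun y => ?_
  have hsub : (fun X : ↥(prodSet Li) => rho μ S A X) ⁻¹' Iic y = ⋂ (r : ℝ) (_ : y < r),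
      {X : ↥(prodSet Li) | ∃ m : Fin d → ℝ, ∑ k, m k ≤ r ∧ S (X + cvec μ m) ∈ A} := by
    ext X
    simpa using rho_le_iff
  rw [hsub]
  exact isClosed_biInter fun r _ => h.isClosed_setOf_exists_sum_le hM0 r

end SystemicRisk
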